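/- arXiv:1704.01866 — 2 statements merged into one kernel-verified Lean document; each statement's English description precedes it below -/
import Mathlib

section
/- Internal split property: if α is a truth-conditional formula of L, then for any formulas φ, ψ of L, α → (φ⩾ψ) ⊨ (α→φ) ⩾ (α→ψ) in InqI (i.e., every team in every intuitionistic Kripke model supporting α→(φ⩾ψ) supports (α→φ)⩾(α→ψ)). -/
/-- Formulas of the language L: atoms, ⊥, ∧, ∨, →, and inquisitive disjunction ⩾. -/
inductive Formula (P : Type) : Type
  | atom : P → Formula P
  | bot  : Formula P
  | and  : Formula P → Formula P → Formula P
  | or   : Formula P → Formula P → Formula P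
  | impl : Formula P → Formula P → Formula P
  | iorr : Formula P → Formula P → Formula P

namespace Formula

/-- Negation ¬φ := φ → ⊥. -/
def neg {P : Type} (φ : Formula P) : Formula P := Formula.impl φ Formula.bot

/-- Polar question ?φ := φ ⩾ ¬φ. -/
def question {P : Type} (φ : Formula P) : Formula P := Formula.iorr φ φ.neg

/-- A standard formula contains no occurrence of inquisitive disjunction ⩾. -/
def standard {P : Type} : Formula P → Prop
  | atom _ => True
  | bot => True
  | and φ ψ => φ.standard ∧ ψ.standard
  | or φ ψ => φ.standard ∧ ψ.standard
  | impl φ ψ => φ.standard ∧ ψ.standard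
  | iorr _ _ => False

end Formula

/-- An intuitionistic Kripke model: a partially ordered set of worlds with a
persistent valuation. -/
structure KripkeModel (P : Type) where
  W : Type
  R : W → W → Prop
  refl : ∀ w, R w w
  antisymm : ∀ w v, R w v → R v w → w = v
  trans : ∀ w v u, R w v → R v u → R w u
  V : W → P → Prop
  persistent : ∀ w v p, R w v → V w p → V v p

/-- R[t], the up-set generated by a team t. -/
def KripkeModel.upset {P : Type} (M : KripkeModel P) (t : Set M.W) : Set M.W :=
  {v | ∃ w ∈ t, M.R w v}

/-- The support relation M,t ⊨ φ between teams and formulas. -/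
def support {P : Type} (M : KripkeModel P) : Formula P → Set M.W → Prop
  | .atom p, t => ∀ w ∈ t, M.V w p
  | .bot, t => t = ∅
  | .and φ ψ, t => support M φ t ∧ support M ψ t
  | .or φ ψ, t => ∃ t₁ t₂, t = t₁ ∪ t₂ ∧ support M φ t₁ ∧ support M ψ t₂
  | .impl φ ψ, t => ∀ t', t' ⊆ M.upset t → support M φ t' → support M ψ t'
  | .iorr φ ψ, t => support M φ t ∨ support M ψ t

/-- Truth at a world: M,w ⊨ φ iff M,{w} ⊨ φ. -/
def truth {P : Type} (M : KripkeModel P) (w : M.W) (φ : Formula P) : Prop :=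
  support M φ {w}

/-- A formula is truth-conditional if support at a team amounts to truth at each world. -/
def truthConditional {P : Type} (φ : Formula P) : Prop :=
  ∀ (M : KripkeModel P) (t : Set M.W), support M φ t ↔ ∀ w ∈ t, truth M w φ

/-- The partial truth-value function: `tvalIs M w φ b` says T(w,φ) is defined with value b
(b = true for value 1, i.e. M,w ⊨ φ; b = false for value 0, i.e. M,w ⊨ ¬φ). -/
def tvalIs {P : Type} (M : KripkeModel P) (w : M.W) (φ : Formula P) : Bool → Prop
  | true => truth M w φ
  | false => truth M w φ.neg

theorem support_of_subset {P : Type} (M : KripkeModel P) (φ : Formula P) {s t : Set M.W}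
    (hst : s ⊆ t) (ht : support M φ t) : support M φ s := by
  induction φ generalizing s t with
  | atom p => exact fun w hw => ht w (hst hw)
  | bot => exact Set.subset_eq_empty hst ht
  | and φ ψ ihφ ihψ => exact ⟨ihφ hst ht.1, ihψ hst ht.2⟩
  | or φ ψ ihφ ihψ =>
    obtain ⟨t₁, t₂, rfl, h₁, h₂⟩ := ht
    refine ⟨s ∩ t₁, s ∩ t₂, ?_, ihφ Set.inter_subset_right h₁, ihψ Set.inter_subset_right h₂⟩
    rw [← Set.inter_union_distrib_left, Set.inter_eq_left.mpr hst]
  | impl φ ψ _ _ =>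
    refine fun t' ht' => ht t' fun v hv => ?_
    obtain ⟨w, hw, hwv⟩ := ht' hv
    exact ⟨w, hst hw, hwv⟩
  | iorr φ ψ ihφ ihψ => exact ht.imp (ihφ hst) (ihψ hst)

/- For truth-conditional `α` the subteams of `R[t]` supporting `α` have a largest element, the
`α`-worlds of `R[t]`, so the universal quantifier in the clause for `α → χ` collapses to it. -/
theorem truthConditional.support_impl_iff {P : Type} {α : Formula P} (hα : truthConditional α)
    (M : KripkeModel P) (χ : Formula P) (t : Set M.W) :
    support M (.impl α χ) t ↔ support M χ {w ∈ M.upset t | truth M w α} := by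
  constructor
  · intro h
    exact h _ (fun w hw => hw.1) ((hα M _).mpr fun w hw => hw.2)
  · intro h t' ht' hαt'
    have hsub : t' ⊆ {w ∈ M.upset t | truth M w α} := fun w hw =>
      ⟨ht' hw, (hα M t').mp hαt' w hw⟩
    exact support_of_subset M χ hsub h

/-- internal split property: if α is truth-conditional, then
α → (φ ⩾ ψ) entails (α → φ) ⩾ (α → ψ). -/
theorem internal_split_property {P : Type} (α φ ψ : Formula P)
    (hα : truthConditional α) (M : KripkeModel P) (t : Set M.W)
    (h : support M (Formula.impl α (Formula.iorr φ ψ)) t) :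
    support M (Formula.iorr (Formula.impl α φ) (Formula.impl α ψ)) t := by
  rw [hα.support_impl_iff] at h
  exact h.imp ((hα.support_impl_iff M φ t).mpr) ((hα.support_impl_iff M ψ t).mpr)
end

section
/- Truth-conditional formulas are expressively standard: a formula φ of L is truth-conditional if and only if φ is InqI-equivalent to some standard formula α (i.e., for every intuitionistic Kripke model M and team t, M,t ⊨ φ iff M,t ⊨ α). Moreover, if R(φ) = {α₁,…,αₙ}, then φ has the same truth conditions as the standard disjunction α₁∨⋯∨αₙ: for every intuitionistic Kripke model M and world w, M,w ⊨ φ iff M,w ⊨ α₁∨⋯∨αₙ. -/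
/-- Big conjunction of a list of formulas (empty conjunction is the verum ⊥→⊥). -/
def bigConj {P : Type} : List (Formula P) → Formula P
  | [] => Formula.impl Formula.bot Formula.bot
  | [φ] => φ
  | φ :: ψ :: rest => Formula.and φ (bigConj (ψ :: rest))

/-- Big disjunction (with ∨) of a list of formulas. -/
def bigDisj {P : Type} : List (Formula P) → Formula P
  | [] => Formula.bot
  | [φ] => φ
  | φ :: ψ :: rest => Formula.or φ (bigDisj (ψ :: rest))

/-- All ways of choosing, for each element `a` of the second list, a pair `(a,b)`
with `b` from the first list; these represent the functions f : R(φ) → R(ψ). -/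
def selections {P : Type} (bs : List (Formula P)) :
    List (Formula P) → List (List (Formula P × Formula P))
  | [] => [[]]
  | a :: rest => (selections bs rest).flatMap (fun s => bs.map (fun b => (a, b) :: s))

/-- The resolutions R(φ) of a formula φ. -/
def resolutions {P : Type} : Formula P → List (Formula P)
  | .atom p => [.atom p]
  | .bot => [.bot]
  | .and φ ψ => (resolutions φ).flatMap (fun a => (resolutions ψ).map (fun b => .and a b))
  | .or φ ψ => (resolutions φ).flatMap (fun a => (resolutions ψ).map (fun b => .or a b))
  | .impl φ ψ => (selections (resolutions ψ) (resolutions φ)).map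
      (fun s => bigConj (s.map (fun ab => Formula.impl ab.1 ab.2)))
  | .iorr φ ψ => resolutions φ ++ resolutions ψ

/-!
A team supports `φ` iff it supports one of its resolutions. The interesting case is `φ → ψ`:
resolutions are standard, hence truth-conditional, so for each resolution `a` of `φ` the worlds of
`R[t]` at which `a` is true form the largest team within `R[t]` supporting `a`, and a resolution of
`ψ` supported there is the value `f a` of a resolution of `φ → ψ` supported at `t`. At a single
world this makes `φ` true iff the standard disjunction of its resolutions is. Standard formulas are
truth-conditional, and two truth-conditional formulas with the same truth conditions are
equivalent.
-/

section

variable {P : Type}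

namespace KripkeModel

variable (M : KripkeModel P)

theorem upset_mono {t t' : Set M.W} (h : t' ⊆ t) : M.upset t' ⊆ M.upset t := by
  rintro v ⟨w, hw, hwv⟩
  exact ⟨w, h hw, hwv⟩

theorem upset_empty : M.upset ∅ = ∅ := by
  simp [upset]

theorem mem_upset_singleton {w v : M.W} : v ∈ M.upset {w} ↔ M.R w v := by
  simp [upset]

end KripkeModel

section Support

variable (M : KripkeModel P)

theorem support_empty (φ : Formula P) : support M φ ∅ := by
  induction φ with
  | atom p => simp [support]
  | bot => rfl
  | and φ ψ ihφ ihψ => exact ⟨ihφ, ihψ⟩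
  | or φ ψ ihφ ihψ => exact ⟨∅, ∅, (Set.union_empty ∅).symm, ihφ, ihψ⟩
  | impl φ ψ ihφ ihψ =>
    intro t' ht' _
    rw [M.upset_empty, Set.subset_empty_iff] at ht'
    exact ht' ▸ ihψ
  | iorr φ ψ ihφ ihψ => exact Or.inl ihφ

theorem support_mono (φ : Formula P) {t t' : Set M.W} (h : t' ⊆ t) (hs : support M φ t) :
    support M φ t' := by
  induction φ generalizing t t' with
  | atom p => exact fun w hw => hs w (h hw)
  | bot => exact Set.subset_empty_iff.mp (hs ▸ h)
  | and φ ψ ihφ ihψ => exact ⟨ihφ h hs.1, ihψ h hs.2⟩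
  | or φ ψ ihφ ihψ =>
    obtain ⟨t₁, t₂, rfl, h₁, h₂⟩ := hs
    refine ⟨t' ∩ t₁, t' ∩ t₂, ?_, ihφ Set.inter_subset_right h₁,
      ihψ Set.inter_subset_right h₂⟩
    rw [← Set.inter_union_distrib_left, Set.inter_eq_left.mpr h]
  | impl φ ψ _ _ => exact fun s hs' hφ => hs s (hs'.trans (M.upset_mono h)) hφ
  | iorr φ ψ ihφ ihψ => exact hs.imp (ihφ h) (ihψ h)

theorem truth_of_support {φ : Formula P} {t : Set M.W} {w : M.W} (hw : w ∈ t)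
    (hs : support M φ t) : truth M w φ :=
  support_mono M φ (Set.singleton_subset_iff.mpr hw) hs

theorem truth_or {φ ψ : Formula P} {w : M.W} :
    truth M w (.or φ ψ) ↔ truth M w φ ∨ truth M w ψ := by
  constructor
  · rintro ⟨t₁, t₂, hw, h₁, h₂⟩
    have hw : w ∈ t₁ ∪ t₂ := hw ▸ rfl
    exact hw.imp (truth_of_support M · h₁) (truth_of_support M · h₂)
  · rintro (h | h)
    · exact ⟨{w}, ∅, (Set.union_empty _).symm, h, support_empty M ψ⟩
    · exact ⟨∅, {w}, (Set.empty_union _).symm, support_empty M φ, h⟩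

end Support

theorem Formula.standard.truthConditional {α : Formula P} (h : α.standard) :
    truthConditional α := by
  intro M t
  refine ⟨fun hs w hw => truth_of_support M hw hs, fun H => ?_⟩
  induction α generalizing t with
  | atom p => exact fun w hw => H w hw w rfl
  | bot => exact Set.eq_empty_iff_forall_notMem.mpr fun w hw => Set.singleton_ne_empty w (H w hw)
  | and φ ψ ihφ ihψ =>
    exact ⟨ihφ h.1 t fun w hw => (H w hw).1, ihψ h.2 t fun w hw => (H w hw).2⟩
  | or φ ψ ihφ ihψ =>
    refine ⟨{w ∈ t | truth M w φ}, {w ∈ t | truth M w ψ}, ?_,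
      ihφ h.1 _ fun w hw => hw.2, ihψ h.2 _ fun w hw => hw.2⟩
    ext w
    simp only [Set.mem_union, Set.mem_sep_iff, ← and_or_left, iff_self_and]
    exact fun hw => (truth_or M).mp (H w hw)
  | impl φ ψ _ ihψ =>
    intro t' ht' hφ
    refine ihψ h.2 t' fun v hv => ?_
    obtain ⟨w, hw, hwv⟩ := ht' hv
    exact H w hw {v} (Set.singleton_subset_iff.mpr ((M.mem_upset_singleton).mpr hwv))
      (truth_of_support M hv hφ)
  | iorr φ ψ _ _ => exact h.elim

theorem standard_bigConj {l : List (Formula P)} (h : ∀ a ∈ l, a.standard) :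
    (bigConj l).standard := by
  induction l with
  | nil => exact ⟨trivial, trivial⟩
  | cons a l ih =>
    cases l with
    | nil => exact h a List.mem_cons_self
    | cons b l => exact ⟨h a List.mem_cons_self, ih fun x hx => h x (List.mem_cons_of_mem a hx)⟩

theorem standard_bigDisj {l : List (Formula P)} (h : ∀ a ∈ l, a.standard) :
    (bigDisj l).standard := by
  induction l with
  | nil => trivial
  | cons a l ih =>
    cases l with
    | nil => exact h a List.mem_cons_self
    | cons b l => exact ⟨h a List.mem_cons_self, ih fun x hx => h x (List.mem_cons_of_mem a hx)⟩

theorem support_bigConj (M : KripkeModel P) (l : List (Formula P)) (t : Set M.W) :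
    support M (bigConj l) t ↔ ∀ a ∈ l, support M a t := by
  induction l with
  | nil => exact iff_of_true (fun _ _ h => h) (by simp)
  | cons a l ih =>
    cases l with
    | nil => simp [bigConj]
    | cons b l => rw [List.forall_mem_cons, ← ih]; rfl

theorem truth_bigDisj (M : KripkeModel P) (l : List (Formula P)) (w : M.W) :
    truth M w (bigDisj l) ↔ ∃ a ∈ l, truth M w a := by
  induction l with
  | nil => exact iff_of_false (Set.singleton_ne_empty w) (by simp)
  | cons a l ih =>
    cases l with
    | nil => simp [bigDisj]
    | cons b l => rw [List.exists_mem_cons_iff, ← ih]; exact truth_or M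

theorem mem_of_mem_selections {bs as : List (Formula P)} {s : List (Formula P × Formula P)}
    (hs : s ∈ selections bs as) {p : Formula P × Formula P} (hp : p ∈ s) :
    p.1 ∈ as ∧ p.2 ∈ bs := by
  induction as generalizing s with
  | nil => simp_all [selections]
  | cons a as ih =>
    simp only [selections, List.mem_flatMap, List.mem_map] at hs
    obtain ⟨s, hs, b, hb, rfl⟩ := hs
    rcases List.mem_cons.mp hp with rfl | hp
    · exact ⟨List.mem_cons_self, hb⟩
    · exact (ih hs hp).imp_left (List.mem_cons_of_mem a)

theorem exists_selections_iff {bs as : List (Formula P)} (Q : Formula P → Formula P → Prop) :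
    (∃ s ∈ selections bs as, ∀ p ∈ s, Q p.1 p.2) ↔ ∀ a ∈ as, ∃ b ∈ bs, Q a b := by
  induction as with
  | nil => simp [selections]
  | cons a as ih =>
    simp only [selections, List.mem_flatMap, List.mem_map, List.forall_mem_cons, ← ih]
    constructor
    · rintro ⟨_, ⟨s, hs, b, hb, rfl⟩, hQ⟩
      rw [List.forall_mem_cons] at hQ
      exact ⟨⟨b, hb, hQ.1⟩, s, hs, hQ.2⟩
    · rintro ⟨⟨b, hb, hab⟩, s, hs, hQ⟩
      exact ⟨_, ⟨s, hs, b, hb, rfl⟩, List.forall_mem_cons.mpr ⟨hab, hQ⟩⟩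

theorem standard_of_mem_resolutions {φ a : Formula P} (ha : a ∈ resolutions φ) :
    a.standard := by
  induction φ generalizing a with
  | atom p => simp_all [resolutions, Formula.standard]
  | bot => simp_all [resolutions, Formula.standard]
  | and φ ψ ihφ ihψ | or φ ψ ihφ ihψ =>
    simp only [resolutions, List.mem_flatMap, List.mem_map] at ha
    obtain ⟨a, ha, b, hb, rfl⟩ := ha
    exact ⟨ihφ ha, ihψ hb⟩
  | impl φ ψ ihφ ihψ =>
    simp only [resolutions, List.mem_map] at ha
    obtain ⟨s, hs, rfl⟩ := ha
    refine standard_bigConj fun c hc => ?_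
    obtain ⟨p, hp, rfl⟩ := List.mem_map.mp hc
    exact ⟨ihφ (mem_of_mem_selections hs hp).1, ihψ (mem_of_mem_selections hs hp).2⟩
  | iorr φ ψ ihφ ihψ => exact (List.mem_append.mp ha).elim ihφ ihψ

theorem support_impl_iff_of_resolutions (M : KripkeModel P) {φ ψ : Formula P}
    {A B : List (Formula P)} (hA : ∀ a ∈ A, a.standard)
    (hφ : ∀ t, support M φ t ↔ ∃ a ∈ A, support M a t)
    (hψ : ∀ t, support M ψ t ↔ ∃ b ∈ B, support M b t) (t : Set M.W) :
    support M (.impl φ ψ) t ↔ ∀ a ∈ A, ∃ b ∈ B, support M (.impl a b) t := by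
  constructor
  · intro h a ha
    set s : Set M.W := {v ∈ M.upset t | truth M v a}
    have hsa : support M a s := ((hA a ha).truthConditional M s).mpr fun v hv => hv.2
    obtain ⟨b, hb, hsb⟩ := (hψ s).mp (h s (fun v hv => hv.1) ((hφ s).mpr ⟨a, ha, hsa⟩))
    refine ⟨b, hb, fun t' ht' hta => support_mono M b (fun v hv => ?_) hsb⟩
    exact ⟨ht' hv, truth_of_support M hv hta⟩
  · intro h t' ht' hφt'
    obtain ⟨a, ha, hsa⟩ := (hφ t').mp hφt'
    obtain ⟨b, hb, hab⟩ := h a ha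
    exact (hψ t').mpr ⟨b, hb, hab t' ht' hsa⟩

theorem support_iff_exists_resolution (M : KripkeModel P) (φ : Formula P) (t : Set M.W) :
    support M φ t ↔ ∃ a ∈ resolutions φ, support M a t := by
  induction φ generalizing t with
  | atom p => simp [resolutions]
  | bot => simp [resolutions]
  | and φ ψ ihφ ihψ =>
    simp only [support, resolutions, List.mem_flatMap, List.mem_map, ihφ, ihψ]
    constructor
    · rintro ⟨⟨a, ha, hsa⟩, b, hb, hsb⟩
      exact ⟨_, ⟨a, ha, b, hb, rfl⟩, hsa, hsb⟩
    · rintro ⟨_, ⟨a, ha, b, hb, rfl⟩, hsa, hsb⟩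
      exact ⟨⟨a, ha, hsa⟩, b, hb, hsb⟩
  | or φ ψ ihφ ihψ =>
    simp only [support, resolutions, List.mem_flatMap, List.mem_map, ihφ, ihψ]
    constructor
    · rintro ⟨t₁, t₂, ht, ⟨a, ha, hsa⟩, b, hb, hsb⟩
      exact ⟨_, ⟨a, ha, b, hb, rfl⟩, t₁, t₂, ht, hsa, hsb⟩
    · rintro ⟨_, ⟨a, ha, b, hb, rfl⟩, t₁, t₂, ht, hsa, hsb⟩
      exact ⟨t₁, t₂, ht, ⟨a, ha, hsa⟩, b, hb, hsb⟩
  | impl φ ψ ihφ ihψ =>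
    rw [support_impl_iff_of_resolutions M (fun a ha => standard_of_mem_resolutions ha) ihφ ihψ,
      ← exists_selections_iff]
    simp only [resolutions, List.mem_map, exists_exists_and_eq_and, support_bigConj,
      forall_exists_index, and_imp, forall_apply_eq_imp_iff₂]
  | iorr φ ψ ihφ ihψ => simp [support, resolutions, ihφ, ihψ, or_and_right, exists_or]

theorem truth_iff_truth_bigDisj_resolutions (M : KripkeModel P) (w : M.W) (φ : Formula P) :
    truth M w φ ↔ truth M w (bigDisj (resolutions φ)) :=
  (support_iff_exists_resolution M φ {w}).trans (truth_bigDisj M _ w).symm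

theorem support_iff_of_truthConditional {φ α : Formula P} (hφ : truthConditional φ)
    (hα : truthConditional α)
    (h : ∀ (M : KripkeModel P) (w : M.W), truth M w φ ↔ truth M w α)
    (M : KripkeModel P) (t : Set M.W) : support M φ t ↔ support M α t := by
  rw [hφ M t, hα M t]
  exact forall₂_congr fun w _ => h M w

theorem truthConditional_of_support_iff {φ α : Formula P} (hα : truthConditional α)
    (h : ∀ (M : KripkeModel P) (t : Set M.W), support M φ t ↔ support M α t) :
    truthConditional φ := by
  intro M t
  rw [h M t, hα M t]
  exact forall₂_congr fun w _ => (h M {w}).symm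

end

/-- a formula is truth-conditional iff it is equivalent to some
standard formula; moreover φ has the same truth conditions as the standard
disjunction of its resolutions. -/
theorem truthConditional_iff_standard {P : Type} (φ : Formula P) :
    (truthConditional φ ↔
      ∃ α : Formula P, α.standard ∧
        ∀ (M : KripkeModel P) (t : Set M.W), (support M φ t ↔ support M α t)) ∧
    (∀ (M : KripkeModel P) (w : M.W),
      truth M w φ ↔ truth M w (bigDisj (resolutions φ))) := by
  have hstd : (bigDisj (resolutions φ)).standard :=
    standard_bigDisj fun _ => standard_of_mem_resolutions
  have htruth (M : KripkeModel P) (w : M.W) := truth_iff_truth_bigDisj_resolutions M w φ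
  refine ⟨⟨fun hφ => ?_, fun ⟨α, hα, h⟩ => ?_⟩, htruth⟩
  · exact ⟨_, hstd, support_iff_of_truthConditional hφ hstd.truthConditional htruth⟩
  · exact truthConditional_of_support_iff hα.truthConditional h
end
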